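/- arXiv:0710.4022 — 5 statements merged into one kernel-verified Lean document; each statement's English description precedes it below -/
import Mathlib

section
/- For every positive integer n, ∑_{k=1}^{n} C(n,k) (-1)^{k+1}/k^2 = (1/2)(H_n)^2 + (1/2) H_n^{(2)}, where H_n^{(r)} = ∑_{j=1}^n 1/j^r. -/
open Finset

private lemma alt_sum_choose (m : ℕ) (hm : 1 ≤ m) :
    ∑ k ∈ Finset.Icc 1 m, (m.choose k : ℝ) * (-1 : ℝ) ^ (k + 1) = 1 := by
  have h0 : ∑ i ∈ Finset.range (m + 1), (-1 : ℝ) ^ i * (m.choose i : ℝ) = 0 := by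
    have := Int.alternating_sum_range_choose (n := m)
    rw [if_neg (by omega)] at this
    exact_mod_cast this
  have h1 : Finset.Icc 1 m = Finset.Ico 1 (m + 1) := by
    rw [Finset.Ico_add_one_right_eq_Icc]
  rw [Finset.range_eq_Ico, Finset.sum_eq_sum_Ico_succ_bot (by omega)] at h0
  simp only [pow_zero, one_mul, Nat.choose_zero_right, Nat.cast_one] at h0
  rw [h1]
  have : ∑ k ∈ Finset.Ico 1 (m + 1), (m.choose k : ℝ) * (-1 : ℝ) ^ (k + 1)
      = -∑ i ∈ Finset.Ico 1 (m + 1), (-1 : ℝ) ^ i * (m.choose i : ℝ) := by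
    rw [← Finset.sum_neg_distrib]
    refine Finset.sum_congr rfl fun k _ => ?_
    ring
  rw [this]; linarith

private lemma split_sum (m : ℕ) (g : ℕ → ℝ) :
    ∑ k ∈ Finset.Icc 1 (m + 1), ((m + 1).choose k : ℝ) * (-1 : ℝ) ^ (k + 1) * g k
      = ∑ k ∈ Finset.Icc 1 m, (m.choose k : ℝ) * (-1 : ℝ) ^ (k + 1) * g k
        + ∑ k ∈ Finset.Icc 1 (m + 1), (m.choose (k - 1) : ℝ) * (-1 : ℝ) ^ (k + 1) * g k := by
  have h1 : ∑ k ∈ Finset.Icc 1 (m + 1), ((m + 1).choose k : ℝ) * (-1 : ℝ) ^ (k + 1) * g k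
      = ∑ k ∈ Finset.Icc 1 (m + 1),
          ((m.choose k : ℝ) * (-1 : ℝ) ^ (k + 1) * g k
            + (m.choose (k - 1) : ℝ) * (-1 : ℝ) ^ (k + 1) * g k) := by
    refine Finset.sum_congr rfl fun k hk => ?_
    have hk1 : 1 ≤ k := (Finset.mem_Icc.mp hk).1
    have hc : (((m + 1).choose k : ℕ) : ℝ) = (m.choose k : ℝ) + (m.choose (k - 1) : ℝ) := by
      obtain ⟨j, rfl⟩ : ∃ j, k = j + 1 := ⟨k - 1, by omega⟩
      rw [Nat.choose_succ_succ]
      push_cast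
      simp [Nat.add_sub_cancel]
      ring
    rw [hc]
    ring
  rw [h1, Finset.sum_add_distrib]
  congr 1
  rw [Finset.sum_Icc_succ_top (by omega)]
  simp [Nat.choose_succ_self]

private lemma shift_choose (m k : ℕ) (hk : 1 ≤ k) :
    (m.choose (k - 1) : ℝ) / k = ((m + 1).choose k : ℝ) / (m + 1) := by
  obtain ⟨j, rfl⟩ : ∃ j, k = j + 1 := ⟨k - 1, by omega⟩
  have h := Nat.add_one_mul_choose_eq m j
  have h' : ((m + 1) * m.choose j : ℝ) = ((m + 1).choose (j + 1) : ℝ) * (j + 1) := by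
    exact_mod_cast congrArg (Nat.cast (R := ℝ)) h
  simp only [Nat.add_sub_cancel]
  rw [div_eq_div_iff (by positivity) (by positivity)]
  push_cast at h' ⊢
  linarith

private lemma aux_harmonic (m : ℕ) :
    ∑ k ∈ Finset.Icc 1 m, (m.choose k : ℝ) * (-1 : ℝ) ^ (k + 1) * (1 / k)
      = ∑ j ∈ Finset.Icc 1 m, (1 : ℝ) / j := by
  induction m with
  | zero => simp
  | succ m ih =>
    rw [split_sum m (fun k => 1 / (k : ℝ)), ih,
      Finset.sum_Icc_succ_top (a := 1) (b := m) (by omega) (fun j => (1 : ℝ) / j)]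
    congr 1
    have : ∑ k ∈ Finset.Icc 1 (m + 1), (m.choose (k - 1) : ℝ) * (-1 : ℝ) ^ (k + 1) * (1 / k)
        = ∑ k ∈ Finset.Icc 1 (m + 1),
            ((m + 1).choose k : ℝ) * (-1 : ℝ) ^ (k + 1) * (1 / (m + 1)) := by
      refine Finset.sum_congr rfl fun k hk => ?_
      have hk1 : 1 ≤ k := (Finset.mem_Icc.mp hk).1
      have := shift_choose m k hk1
      rw [mul_comm ((m.choose (k - 1) : ℝ)) ((-1 : ℝ) ^ (k + 1)),
        mul_comm (((m + 1).choose k : ℝ)) ((-1 : ℝ) ^ (k + 1))]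
      rw [mul_assoc, mul_assoc, mul_one_div, mul_one_div, this]
    rw [this, ← Finset.sum_mul]
    rw [alt_sum_choose (m + 1) (by omega)]
    push_cast
    ring

theorem alternating_binomial_sum_two (n : ℕ) (hn : 0 < n) :
    ∑ k ∈ Finset.Icc 1 n, (n.choose k : ℝ) * (-1 : ℝ) ^ (k + 1) / (k : ℝ) ^ 2
      = (1 / 2) * (∑ j ∈ Finset.Icc 1 n, (1 : ℝ) / j) ^ 2
        + (1 / 2) * ∑ j ∈ Finset.Icc 1 n, (1 : ℝ) / (j : ℝ) ^ 2 := by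
  clear hn
  induction n with
  | zero => simp
  | succ m ih =>
    have hconv : ∀ (p : ℕ) (s : Finset ℕ),
        ∑ k ∈ s, (p.choose k : ℝ) * (-1 : ℝ) ^ (k + 1) / (k : ℝ) ^ 2
          = ∑ k ∈ s, (p.choose k : ℝ) * (-1 : ℝ) ^ (k + 1) * (1 / (k : ℝ) ^ 2) := by
      intro p s; refine Finset.sum_congr rfl fun k _ => ?_; ring
    rw [hconv] at ih ⊢
    rw [split_sum m (fun k => 1 / (k : ℝ) ^ 2), ih]
    have hstep : ∑ k ∈ Finset.Icc 1 (m + 1), (m.choose (k - 1) : ℝ) * (-1 : ℝ) ^ (k + 1) * (1 / (k : ℝ) ^ 2)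
        = (1 / (m + 1 : ℝ)) * ∑ j ∈ Finset.Icc 1 (m + 1), (1 : ℝ) / j := by
      have : ∑ k ∈ Finset.Icc 1 (m + 1), (m.choose (k - 1) : ℝ) * (-1 : ℝ) ^ (k + 1) * (1 / (k : ℝ) ^ 2)
          = ∑ k ∈ Finset.Icc 1 (m + 1),
              (1 / (m + 1 : ℝ)) * (((m + 1).choose k : ℝ) * (-1 : ℝ) ^ (k + 1) * (1 / k)) := by
        refine Finset.sum_congr rfl fun k hk => ?_
        have hk1 : 1 ≤ k := (Finset.mem_Icc.mp hk).1
        have hkr : (0 : ℝ) < (k : ℝ) := by exact_mod_cast hk1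
        have hs := shift_choose m k hk1
        have hkne : (k : ℝ) ≠ 0 := by positivity
        have h2 : (m.choose (k - 1) : ℝ) * (-1 : ℝ) ^ (k + 1) * (1 / (k : ℝ) ^ 2)
            = ((m.choose (k - 1) : ℝ) / k) * ((-1 : ℝ) ^ (k + 1) / k) := by
          rw [sq]
          field_simp
        rw [h2, hs]
        push_cast
        ring
      rw [this, ← Finset.mul_sum, aux_harmonic (m + 1)]
    rw [hstep]
    have hH : ∑ j ∈ Finset.Icc 1 (m + 1), (1 : ℝ) / j
        = ∑ j ∈ Finset.Icc 1 m, (1 : ℝ) / j + 1 / (m + 1 : ℝ) := by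
      rw [Finset.sum_Icc_succ_top (by omega)]; push_cast; ring
    have hH2 : ∑ j ∈ Finset.Icc 1 (m + 1), (1 : ℝ) / (j : ℝ) ^ 2
        = ∑ j ∈ Finset.Icc 1 m, (1 : ℝ) / (j : ℝ) ^ 2 + 1 / (m + 1 : ℝ) ^ 2 := by
      rw [Finset.sum_Icc_succ_top (by omega)]; push_cast; ring
    rw [hH, hH2]
    have hne : (m + 1 : ℝ) ≠ 0 := by positivity
    field_simp
    ring
end

section
/- For every positive integer n, ∑_{k=1}^{n} C(n,k) (-1)^{k+1}/k^3 = (1/6)(H_n)^3 + (1/2) H_n H_n^{(2)} + (1/3) H_n^{(3)}. -/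
/-!
Write `S_s(n) = ∑_{k=1}^n C(n,k) (-1)^(k+1) / k^s`. Pascal's rule together with the absorption
identity `C(n,k-1)/k = C(n+1,k)/(n+1)` gives `S_{s+1}(n+1) = S_{s+1}(n) + S_s(n+1)/(n+1)`, and
`S_0(n) = 1` for `n ≥ 1` because alternating binomial sums vanish. Hence `S_s(n)` is the complete
homogeneous symmetric polynomial of degree `s` in `1, 1/2, …, 1/n`, and the closed forms for
`s = 1, 2, 3` (Newton's identities in terms of the power sums `H_n^(r)`) follow by induction on `n`.
-/

open Finset

variable (K : Type*) [Field K]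

def altBinomialSum (s n : ℕ) : K :=
  ∑ k ∈ Icc 1 n, (n.choose k : K) * (-1) ^ (k + 1) / (k : K) ^ s

def genHarmonic (r n : ℕ) : K :=
  ∑ j ∈ Icc 1 n, 1 / (j : K) ^ r

variable {K}

theorem sum_Icc_one_eq_sum_range {M : Type*} [AddCommMonoid M] (f : ℕ → M) (n : ℕ) :
    ∑ k ∈ Icc 1 n, f k = ∑ j ∈ range n, f (j + 1) := by
  rw [← Ico_add_one_right_eq_Icc, sum_Ico_eq_sum_range]
  simp only [Nat.add_sub_cancel, add_comm]

theorem altBinomialSum_eq_sum_range (s n : ℕ) :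
    altBinomialSum K s n
      = ∑ j ∈ range n, (n.choose (j + 1) : K) * (-1) ^ j / ((j : K) + 1) ^ s := by
  rw [altBinomialSum, sum_Icc_one_eq_sum_range]
  refine sum_congr rfl fun j _ => ?_
  push_cast
  ring

theorem genHarmonic_succ (r n : ℕ) :
    genHarmonic K r (n + 1) = genHarmonic K r n + 1 / ((n : K) + 1) ^ r := by
  rw [genHarmonic, sum_Icc_succ_top (Nat.le_add_left 1 n), Nat.cast_succ, genHarmonic]

theorem altBinomialSum_zero_succ (n : ℕ) : altBinomialSum K 0 (n + 1) = 1 := by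
  have alternating : ∑ j ∈ range (n + 2), (-1 : K) ^ j * ((n + 1).choose j : K) = 0 := by
    exact_mod_cast congrArg (Int.cast : ℤ → K)
      (Int.alternating_sum_range_choose_of_ne n.succ_ne_zero)
  rw [sum_range_succ', pow_zero, Nat.choose_zero_right, Nat.cast_one, mul_one] at alternating
  calc altBinomialSum K 0 (n + 1)
      = -∑ j ∈ range (n + 1), (-1 : K) ^ (j + 1) * ((n + 1).choose (j + 1) : K) := by
        rw [altBinomialSum_eq_sum_range, ← sum_neg_distrib]
        exact sum_congr rfl fun j _ => by ring
    _ = 1 := by linear_combination -alternating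

variable [CharZero K]

theorem choose_succ_div_pow_succ (n j s : ℕ) :
    ((n + 1).choose (j + 1) : K) / ((j : K) + 1) ^ (s + 1)
      = (n.choose (j + 1) : K) / ((j : K) + 1) ^ (s + 1)
        + ((n + 1).choose (j + 1) : K) / ((j : K) + 1) ^ s / ((n : K) + 1) := by
  have pascal : ((n + 1).choose (j + 1) : K) = n.choose j + n.choose (j + 1) := by
    exact_mod_cast Nat.choose_succ_succ n j
  have absorb : ((n : K) + 1) * n.choose j = (n + 1).choose (j + 1) * ((j : K) + 1) := by
    exact_mod_cast Nat.add_one_mul_choose_eq n j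
  have hj := Nat.cast_add_one_ne_zero (R := K) j
  have hn := Nat.cast_add_one_ne_zero (R := K) n
  calc ((n + 1).choose (j + 1) : K) / ((j : K) + 1) ^ (s + 1)
      = (n.choose (j + 1) : K) / ((j : K) + 1) ^ (s + 1)
        + (n.choose j : K) / ((j : K) + 1) ^ (s + 1) := by rw [pascal, add_div, add_comm]
    _ = _ := by
      congr 1
      rw [div_div, div_eq_div_iff (pow_ne_zero _ hj) (mul_ne_zero (pow_ne_zero _ hj) hn)]
      linear_combination ((j : K) + 1) ^ s * absorb

theorem altBinomialSum_succ_succ (s n : ℕ) :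
    altBinomialSum K (s + 1) (n + 1)
      = altBinomialSum K (s + 1) n + altBinomialSum K s (n + 1) / ((n : K) + 1) := by
  have extend_by_zero_term : altBinomialSum K (s + 1) n
      = ∑ j ∈ range (n + 1), (n.choose (j + 1) : K) * (-1) ^ j / ((j : K) + 1) ^ (s + 1) := by
    rw [altBinomialSum_eq_sum_range, sum_range_succ, Nat.choose_succ_self, Nat.cast_zero,
      zero_mul, zero_div, add_zero]
  rw [extend_by_zero_term, altBinomialSum_eq_sum_range, altBinomialSum_eq_sum_range, sum_div,
    ← sum_add_distrib]
  refine sum_congr rfl fun j _ => ?_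
  rw [mul_comm, mul_div_assoc, choose_succ_div_pow_succ]
  ring

theorem altBinomialSum_one (n : ℕ) : altBinomialSum K 1 n = genHarmonic K 1 n := by
  induction n with
  | zero => simp [altBinomialSum, genHarmonic]
  | succ n ih =>
    rw [altBinomialSum_succ_succ, altBinomialSum_zero_succ, ih, genHarmonic_succ, pow_one]

theorem altBinomialSum_two (n : ℕ) :
    altBinomialSum K 2 n = (genHarmonic K 1 n ^ 2 + genHarmonic K 2 n) / 2 := by
  induction n with
  | zero => simp [altBinomialSum, genHarmonic]
  | succ n ih =>
    have hn := Nat.cast_add_one_ne_zero (R := K) n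
    rw [altBinomialSum_succ_succ, altBinomialSum_one, ih, genHarmonic_succ, genHarmonic_succ]
    field_simp
    ring

theorem altBinomialSum_three (n : ℕ) :
    altBinomialSum K 3 n = genHarmonic K 1 n ^ 3 / 6 + genHarmonic K 1 n * genHarmonic K 2 n / 2
      + genHarmonic K 3 n / 3 := by
  induction n with
  | zero => simp [altBinomialSum, genHarmonic]
  | succ n ih =>
    have hn := Nat.cast_add_one_ne_zero (R := K) n
    rw [altBinomialSum_succ_succ, altBinomialSum_two, ih, genHarmonic_succ, genHarmonic_succ,
      genHarmonic_succ]
    field_simp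
    ring

theorem alternating_binomial_sum_three_general (n : ℕ) :
    ∑ k ∈ Finset.Icc 1 n, (n.choose k : ℝ) * (-1 : ℝ) ^ (k + 1) / (k : ℝ) ^ 3
      = (1 / 6) * (∑ j ∈ Finset.Icc 1 n, (1 : ℝ) / j) ^ 3
        + (1 / 2) * (∑ j ∈ Finset.Icc 1 n, (1 : ℝ) / j)
            * (∑ j ∈ Finset.Icc 1 n, (1 : ℝ) / (j : ℝ) ^ 2)
        + (1 / 3) * ∑ j ∈ Finset.Icc 1 n, (1 : ℝ) / (j : ℝ) ^ 3 := by
  have closed_form := altBinomialSum_three (K := ℝ) n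
  simp only [altBinomialSum, genHarmonic, pow_one] at closed_form
  rw [closed_form]
  ring

theorem alternating_binomial_sum_three (n : ℕ) (hn : 0 < n) :
    ∑ k ∈ Finset.Icc 1 n, (n.choose k : ℝ) * (-1 : ℝ) ^ (k + 1) / (k : ℝ) ^ 3
      = (1 / 6) * (∑ j ∈ Finset.Icc 1 n, (1 : ℝ) / j) ^ 3
        + (1 / 2) * (∑ j ∈ Finset.Icc 1 n, (1 : ℝ) / j)
            * (∑ j ∈ Finset.Icc 1 n, (1 : ℝ) / (j : ℝ) ^ 2)
        + (1 / 3) * ∑ j ∈ Finset.Icc 1 n, (1 : ℝ) / (j : ℝ) ^ 3 :=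
  alternating_binomial_sum_three_general n
end

section
/- For every positive integer n, ∑_{k=1}^{n} (H_k)^2/k + ∑_{k=1}^{n} H_k^{(2)}/k = (1/3)(H_n)^3 + H_n H_n^{(2)} + (2/3) H_n^{(3)}. -/
/-!
Both sides vanish at `n = 0`, so it suffices that they have the same increments. Writing
`a = H_n`, `b = H_n^{(2)}`, `c = H_n^{(3)}` and `x = 1/(n+1)`, passing from `n` to `n + 1` replaces
`(a, b, c)` by `(a + x, b + x², c + x³)`, and by a polynomial identity in `x` the increment of
`a³/3 + a b + 2c/3` is `((a + x)² + b + x²) x`, the `(n+1)`-st term of the left-hand side.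
-/

open Finset

noncomputable def harmonicPow (r n : ℕ) : ℝ := ∑ j ∈ Icc 1 n, 1 / (j : ℝ) ^ r

theorem harmonicPow_def (r n : ℕ) : harmonicPow r n = ∑ j ∈ Icc 1 n, 1 / (j : ℝ) ^ r := rfl

theorem harmonicPow_one (n : ℕ) : harmonicPow 1 n = ∑ j ∈ Icc 1 n, 1 / (j : ℝ) := by
  simp only [harmonicPow_def, pow_one]

@[simp]
theorem harmonicPow_zero_right (r : ℕ) : harmonicPow r 0 = 0 := by
  simp [harmonicPow_def]

theorem harmonicPow_succ (r n : ℕ) :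
    harmonicPow r (n + 1) = harmonicPow r n + (1 / ((n : ℝ) + 1)) ^ r := by
  rw [harmonicPow_def, sum_Icc_succ_top (Nat.le_add_left 1 n), ← harmonicPow_def, one_div_pow]
  push_cast
  rfl

theorem sum_Icc_one_eq_of_succ {M : Type*} [AddCommMonoid M] (F g : ℕ → M) (h₀ : F 0 = 0)
    (hsucc : ∀ n, F (n + 1) = F n + g (n + 1)) (n : ℕ) : ∑ k ∈ Icc 1 n, g k = F n := by
  induction n with
  | zero => simp [h₀]
  | succ n ih => rw [sum_Icc_succ_top (Nat.le_add_left 1 n), ih, hsucc]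

theorem cubic_harmonic_increment {K : Type*} [Field K] [CharZero K] (a b c x : K) :
    1 / 3 * (a + x) ^ 3 + (a + x) * (b + x ^ 2) + 2 / 3 * (c + x ^ 3)
      = 1 / 3 * a ^ 3 + a * b + 2 / 3 * c + ((a + x) ^ 2 + (b + x ^ 2)) * x := by
  ring

theorem adamchik_identity_three_general (n : ℕ) :
    (∑ k ∈ Finset.Icc 1 n, (∑ j ∈ Finset.Icc 1 k, (1 : ℝ) / j) ^ 2 / k)
      + ∑ k ∈ Finset.Icc 1 n, (∑ j ∈ Finset.Icc 1 k, (1 : ℝ) / (j : ℝ) ^ 2) / k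
      = (1 / 3) * (∑ j ∈ Finset.Icc 1 n, (1 : ℝ) / j) ^ 3
        + (∑ j ∈ Finset.Icc 1 n, (1 : ℝ) / j)
            * (∑ j ∈ Finset.Icc 1 n, (1 : ℝ) / (j : ℝ) ^ 2)
        + (2 / 3) * ∑ j ∈ Finset.Icc 1 n, (1 : ℝ) / (j : ℝ) ^ 3 := by
  simp only [← harmonicPow_one, ← harmonicPow_def, ← sum_add_distrib]
  refine sum_Icc_one_eq_of_succ
    (fun n ↦ 1 / 3 * harmonicPow 1 n ^ 3 + harmonicPow 1 n * harmonicPow 2 n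
      + 2 / 3 * harmonicPow 3 n) _ (by simp) (fun n ↦ ?_) n
  simp only [harmonicPow_succ, pow_one]
  rw [cubic_harmonic_increment]
  push_cast
  ring

theorem adamchik_identity_three (n : ℕ) (hn : 0 < n) :
    (∑ k ∈ Finset.Icc 1 n, (∑ j ∈ Finset.Icc 1 k, (1 : ℝ) / j) ^ 2 / k)
      + ∑ k ∈ Finset.Icc 1 n, (∑ j ∈ Finset.Icc 1 k, (1 : ℝ) / (j : ℝ) ^ 2) / k
      = (1 / 3) * (∑ j ∈ Finset.Icc 1 n, (1 : ℝ) / j) ^ 3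
        + (∑ j ∈ Finset.Icc 1 n, (1 : ℝ) / j)
            * (∑ j ∈ Finset.Icc 1 n, (1 : ℝ) / (j : ℝ) ^ 2)
        + (2 / 3) * ∑ j ∈ Finset.Icc 1 n, (1 : ℝ) / (j : ℝ) ^ 3 :=
  adamchik_identity_three_general n
end

section
/- For real x with |x| < 1, ∑_{n=1}^{∞} (H_n/n) x^n = (1/2) log²(1-x) + Li₂(x), where Li₂(x) = ∑_{k=1}^∞ x^k/k². -/
/-!
Squaring `-log (1 - x) = ∑ xⁿ⁺¹/(n+1)` by the Cauchy product, the coefficient of `xⁿ⁺²` is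
`∑_{i+j=n} 1/((i+1)(j+1))`, which by partial fractions `1/((i+1)(j+1)) = (1/(i+1) + 1/(j+1))/(n+2)`
equals `2 H_{n+1}/(n+2)`. Hence `log²(1-x)/2 = ∑ H_n xⁿ⁺¹/(n+1)`, and
`H_{n+1}/(n+1) = H_n/(n+1) + 1/(n+1)²` splits the series into this one plus `Li₂ x`.
-/

/-- The dilogarithm, defined by its power series (convergent for `|x| ≤ 1`). -/
noncomputable def Li2 (x : ℝ) : ℝ := ∑' k : ℕ, x ^ (k + 1) / ((k : ℝ) + 1) ^ 2

open Finset Real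

theorem hasSum_Li2 {x : ℝ} (hx : |x| ≤ 1) :
    HasSum (fun k : ℕ => x ^ (k + 1) / ((k : ℝ) + 1) ^ 2) (Li2 x) := by
  have hsq : Summable fun k : ℕ => 1 / ((k : ℝ) + 1) ^ 2 := by
    simpa using (summable_nat_add_iff 1).mpr (Real.summable_one_div_nat_pow.mpr one_lt_two)
  refine (hsq.of_norm_bounded fun k => ?_).hasSum
  rw [norm_div, norm_pow, Real.norm_eq_abs, norm_of_nonneg (by positivity)]
  gcongr
  exact pow_le_one₀ (abs_nonneg x) hx

theorem sum_antidiagonal_inv_succ_mul_inv_succ {K : Type*} [Field K] [CharZero K] (n : ℕ) :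
    ∑ p ∈ antidiagonal n, (((p.1 : K) + 1) * ((p.2 : K) + 1))⁻¹ =
      2 * harmonic (n + 1) / ((n : K) + 2) := by
  have partial_fractions : ∀ p ∈ antidiagonal n, (((p.1 : K) + 1) * ((p.2 : K) + 1))⁻¹ =
      (((p.1 : K) + 1)⁻¹ + ((p.2 : K) + 1)⁻¹) / ((n : K) + 2) := by
    intro p hp
    have h₁ : (p.1 : K) + 1 ≠ 0 := Nat.cast_add_one_ne_zero p.1
    have h₂ : (p.2 : K) + 1 ≠ 0 := Nat.cast_add_one_ne_zero p.2
    have hn : (n : K) + 2 ≠ 0 := by exact_mod_cast (n + 1).succ_ne_zero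
    rw [← mem_antidiagonal.mp hp] at hn ⊢
    field_simp
    push_cast
    ring
  have hswap :
      ∑ p ∈ antidiagonal n, ((p.2 : K) + 1)⁻¹ = ∑ p ∈ antidiagonal n, ((p.1 : K) + 1)⁻¹ :=
    Nat.sum_antidiagonal_swap (f := fun p => ((p.1 : K) + 1)⁻¹)
  rw [sum_congr rfl partial_fractions, ← sum_div, sum_add_distrib, hswap, ← two_mul,
    Nat.sum_antidiagonal_eq_sum_range_succ_mk, harmonic]
  push_cast
  rfl

theorem hasSum_sum_antidiagonal_log_one_sub_sq {x : ℝ} (hx : |x| < 1) :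
    HasSum (fun n : ℕ => ∑ p ∈ antidiagonal n,
      x ^ (p.1 + 1) / ((p.1 : ℝ) + 1) * (x ^ (p.2 + 1) / ((p.2 : ℝ) + 1))) (log (1 - x) ^ 2) := by
  have hnorm : Summable fun n : ℕ => ‖x ^ (n + 1) / ((n : ℝ) + 1)‖ := by
    refine (hasSum_pow_div_log_of_abs_lt_one (x := |x|) (by rwa [abs_abs])).summable.congr
      fun n => ?_
    rw [norm_div, norm_pow, Real.norm_eq_abs, norm_of_nonneg (by positivity)]
  have := (summable_norm_sum_mul_antidiagonal_of_summable_norm hnorm hnorm).of_norm.hasSum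
  rwa [← tsum_mul_tsum_eq_tsum_sum_antidiagonal_of_summable_norm hnorm hnorm,
    (hasSum_pow_div_log_of_abs_lt_one hx).tsum_eq, neg_mul_neg, ← sq] at this

theorem hasSum_two_mul_harmonic_succ_div_mul_pow {x : ℝ} (hx : |x| < 1) :
    HasSum (fun n : ℕ => 2 * harmonic (n + 1) / ((n : ℝ) + 2) * x ^ (n + 2))
      (log (1 - x) ^ 2) := by
  refine (hasSum_sum_antidiagonal_log_one_sub_sq hx).congr_fun fun n => ?_
  rw [← sum_antidiagonal_inv_succ_mul_inv_succ, sum_mul]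
  refine sum_congr rfl fun p hp => ?_
  rw [← mem_antidiagonal.mp hp, show p.1 + p.2 + 2 = (p.1 + 1) + (p.2 + 1) by ring, pow_add]
  field_simp

theorem hasSum_harmonic_div_succ_mul_pow_succ {x : ℝ} (hx : |x| < 1) :
    HasSum (fun n : ℕ => harmonic n / ((n : ℝ) + 1) * x ^ (n + 1)) (log (1 - x) ^ 2 / 2) := by
  rw [← hasSum_nat_add_iff' 1]
  simp only [range_one, sum_singleton, harmonic_zero, Rat.cast_zero, zero_div, zero_mul, sub_zero]
  refine ((hasSum_two_mul_harmonic_succ_div_mul_pow hx).div_const 2).congr_fun fun n => ?_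
  push_cast
  ring

theorem harmonic_eq_sum_Icc_one_div (n : ℕ) :
    (harmonic n : ℝ) = ∑ k ∈ Icc 1 n, (1 : ℝ) / k := by
  simp [harmonic_eq_sum_Icc]

theorem harmonic_over_n_generating_function (x : ℝ) (hx : |x| < 1) :
    HasSum (fun n : ℕ =>
        (∑ k ∈ Finset.Icc 1 (n + 1), (1 : ℝ) / k) / ((n : ℝ) + 1) * x ^ (n + 1))
      ((1 / 2) * (Real.log (1 - x)) ^ 2 + Li2 x) := by
  rw [one_div_mul_eq_div]
  refine ((hasSum_harmonic_div_succ_mul_pow_succ hx).add (hasSum_Li2 hx.le)).congr_fun fun n => ?_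
  rw [← harmonic_eq_sum_Icc_one_div, harmonic_succ]
  push_cast
  field_simp
end

section
/- The series ∑_{n=1}^{∞} H_n/(n² 2^n) converges and equals ζ(3) - (π²/12) log 2. -/
/-!
Write `Liₛ(x) = ∑ xⁿ/nˢ` and `Hₛ(x) = ∑ Hₙ xⁿ/nˢ`. Termwise differentiation gives
`x Liₛ₊₁' = Liₛ` and `x Hₛ₊₁' = Hₛ`, and a Cauchy product gives `H₀(x) = -log(1-x)/(1-x)`.
Hence `H₁ = ½ log²(1-x) + Li₂`, and then
`H₂(x) - Li₃(x) + Li₃(1-x) - Li₂(1-x) log(1-x) - ½ log x log²(1-x)` has zero derivative on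
`(0,1)`; its limit at `0⁺` is `ζ(3)` by Abel's theorem. At `x = 1/2` the `Li₃` terms cancel,
and Euler's reflection `Li₂(x) + Li₂(1-x) = ζ(2) - log x log(1-x)`, proved the same way, gives
`Li₂(1/2) = π²/12 - ½ log² 2`.
-/

open Real Filter Set Topology

noncomputable section

section PowerSeries

variable {c : ℕ → ℝ} {C x : ℝ}

theorem summable_mul_pow_succ_of_abs_le (hc : ∀ n, |c n| ≤ C) (hx : |x| < 1) :
    Summable fun n => c n * x ^ (n + 1) := by
  refine ((summable_geometric_of_lt_one (abs_nonneg x) hx).mul_left C).of_norm_bounded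
    fun n => ?_
  rw [norm_mul, norm_pow, Real.norm_eq_abs, Real.norm_eq_abs]
  calc |c n| * |x| ^ (n + 1) ≤ |c n| * |x| ^ n :=
        mul_le_mul_of_nonneg_left (pow_le_pow_of_le_one (abs_nonneg x) hx.le n.le_succ)
          (abs_nonneg _)
    _ ≤ C * |x| ^ n := mul_le_mul_of_nonneg_right (hc n) (by positivity)

theorem hasDerivAt_tsum_mul_pow_succ (hc : ∀ n, |c n| ≤ C) (hx : |x| < 1) :
    HasDerivAt (fun y => ∑' n, c n * y ^ (n + 1)) (∑' n : ℕ, ((n : ℝ) + 1) * c n * x ^ n) x := by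
  obtain ⟨r, hxr, hr1⟩ := exists_between hx
  have hr0 : 0 < r := (abs_nonneg x).trans_lt hxr
  have hu : Summable fun n : ℕ => C * (((n : ℝ) + 1) * r ^ n) := by
    have hr : ‖r‖ < 1 := by rwa [Real.norm_eq_abs, abs_of_pos hr0]
    refine Summable.mul_left C ?_
    simpa [add_mul] using
      (summable_pow_mul_geometric_of_norm_lt_one 1 hr).add (summable_geometric_of_lt_one hr0.le hr1)
  refine hasDerivAt_tsum_of_isPreconnected (g := fun n y => c n * y ^ (n + 1))
    (g' := fun n y => ((n : ℝ) + 1) * c n * y ^ n) hu isOpen_Ioo isPreconnected_Ioo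
    (fun n y _ => ?_) (fun n y hy => ?_) (y₀ := 0) ⟨neg_neg_of_pos hr0, hr0⟩ ?_
    (abs_lt.1 hxr)
  · refine ((hasDerivAt_pow (n + 1) y).const_mul (c n)).congr_deriv ?_
    rw [Nat.add_sub_cancel]
    push_cast
    ring
  · have hy' : |y| ≤ r := abs_le.2 ⟨hy.1.le, hy.2.le⟩
    rw [norm_mul, norm_mul, norm_pow, Real.norm_eq_abs, Real.norm_eq_abs, Real.norm_eq_abs,
      abs_of_nonneg (by positivity : (0 : ℝ) ≤ n + 1)]
    calc ((n : ℝ) + 1) * |c n| * |y| ^ n = |c n| * (((n : ℝ) + 1) * |y| ^ n) := by ring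
      _ ≤ C * (((n : ℝ) + 1) * r ^ n) :=
          mul_le_mul (hc n) (by gcongr) (by positivity) ((abs_nonneg _).trans (hc n))
  · simp

theorem tendsto_tsum_mul_pow_succ_nhdsLT_one (hc : Summable c) :
    Tendsto (fun x => ∑' n, c n * x ^ (n + 1)) (𝓝[<] 1) (𝓝 (∑' n, c n)) := by
  have h := (tendsto_id.mono_left nhdsWithin_le_nhds).mul
    (Real.tendsto_tsum_powerSeries_nhdsWithin_lt hc.tendsto_sum_tsum_nat)
  rw [one_mul] at h
  refine h.congr fun x => ?_
  rw [← tsum_mul_left]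
  exact tsum_congr fun n => by rw [id, pow_succ]; ring

end PowerSeries

/-- `weightedPolylog a s x = ∑_{n ≥ 1} a (n - 1) xⁿ / nˢ`: the index is shifted by one. -/
def weightedPolylog (a : ℕ → ℝ) (s : ℕ) (x : ℝ) : ℝ :=
  ∑' n : ℕ, a n / ((n : ℝ) + 1) ^ s * x ^ (n + 1)

abbrev polylog (s : ℕ) : ℝ → ℝ := weightedPolylog 1 s

abbrev harmonicPolylog (s : ℕ) : ℝ → ℝ := weightedPolylog (fun n => harmonic (n + 1)) s

section WeightedPolylog

variable {a : ℕ → ℝ} {x : ℝ}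

theorem abs_div_pow_succ_le_one (ha : ∀ n, |a n| ≤ n + 1) (s n : ℕ) :
    |a n / ((n : ℝ) + 1) ^ (s + 1)| ≤ 1 := by
  have hn : (1 : ℝ) ≤ n + 1 := by simp
  rw [abs_div, abs_of_pos (a := ((n : ℝ) + 1) ^ (s + 1)) (by positivity),
    div_le_one (by positivity)]
  exact (ha n).trans (le_self_pow₀ hn s.succ_ne_zero)

theorem summable_weightedPolylog (ha : ∀ n, |a n| ≤ n + 1) (s : ℕ) (hx : |x| < 1) :
    Summable fun n : ℕ => a n / ((n : ℝ) + 1) ^ (s + 1) * x ^ (n + 1) :=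
  summable_mul_pow_succ_of_abs_le (abs_div_pow_succ_le_one ha s) hx

theorem hasDerivAt_weightedPolylog (ha : ∀ n, |a n| ≤ n + 1) (s : ℕ) (hx : |x| < 1)
    (hx₀ : x ≠ 0) :
    HasDerivAt (weightedPolylog a (s + 1)) (weightedPolylog a s x / x) x := by
  refine (hasDerivAt_tsum_mul_pow_succ (abs_div_pow_succ_le_one ha s) hx).congr_deriv ?_
  rw [weightedPolylog, ← tsum_div_const]
  refine tsum_congr fun n => ?_
  have : (n : ℝ) + 1 ≠ 0 := by positivity
  field_simp
  ring

theorem tendsto_weightedPolylog_nhds_zero (ha : ∀ n, |a n| ≤ n + 1) (s : ℕ) :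
    Tendsto (weightedPolylog a (s + 1)) (𝓝 0) (𝓝 0) := by
  have h : ContinuousAt (weightedPolylog a (s + 1)) 0 :=
    (hasDerivAt_tsum_mul_pow_succ (abs_div_pow_succ_le_one ha s) (x := 0) (by simp)).continuousAt
  simpa [ContinuousAt, weightedPolylog] using h

end WeightedPolylog

theorem abs_harmonic_succ_le (n : ℕ) : |(harmonic (n + 1) : ℝ)| ≤ n + 1 := by
  rw [abs_of_pos (by exact_mod_cast harmonic_pos n.succ_ne_zero)]
  calc (harmonic (n + 1) : ℝ) = ∑ i ∈ Finset.range (n + 1), ((i : ℝ) + 1)⁻¹ := by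
        push_cast [harmonic]; rfl
    _ ≤ ∑ i ∈ Finset.range (n + 1), 1 :=
        Finset.sum_le_sum fun i _ => inv_le_one_of_one_le₀ (by simp)
    _ = n + 1 := by simp

theorem abs_one_apply_le (n : ℕ) : |(1 : ℕ → ℝ) n| ≤ n + 1 := by simp

section Polylog

variable {x : ℝ}

theorem polylog_one (hx : |x| < 1) : polylog 1 x = -log (1 - x) := by
  refine Eq.trans (tsum_congr fun n => ?_) (hasSum_pow_div_log_of_abs_lt_one hx).tsum_eq
  simp only [Pi.one_apply, pow_one]
  ring

theorem hasDerivAt_polylog_succ (s : ℕ) (hx : |x| < 1) (hx₀ : x ≠ 0) :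
    HasDerivAt (polylog (s + 1)) (polylog s x / x) x :=
  hasDerivAt_weightedPolylog abs_one_apply_le s hx hx₀

theorem tendsto_polylog_nhds_zero (s : ℕ) : Tendsto (polylog (s + 1)) (𝓝 0) (𝓝 0) :=
  tendsto_weightedPolylog_nhds_zero abs_one_apply_le s

theorem hasDerivAt_polylog_two (hx : |x| < 1) (hx₀ : x ≠ 0) :
    HasDerivAt (polylog 2) (-log (1 - x) / x) x := by
  simpa only [polylog_one hx] using hasDerivAt_polylog_succ 1 hx hx₀

theorem tendsto_polylog_one_sub {s : ℕ} (hs : 1 < s) :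
    Tendsto (fun x => polylog s (1 - x)) (𝓝[>] 0) (𝓝 (∑' n : ℕ, 1 / ((n : ℝ) + 1) ^ s)) := by
  have hsum : Summable fun n : ℕ => 1 / ((n : ℝ) + 1) ^ s := by
    simpa using (summable_nat_add_iff 1).2 (Real.summable_one_div_nat_pow.2 hs)
  have h1 : Tendsto (fun x : ℝ => 1 - x) (𝓝[>] 0) (𝓝[<] 1) := by
    refine tendsto_nhdsWithin_of_tendsto_nhds_of_eventually_within _ ?_ ?_
    · simpa using ((continuous_sub_left (1 : ℝ)).tendsto 0).mono_left nhdsWithin_le_nhds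
    · filter_upwards [self_mem_nhdsWithin] with x hx
      simpa using hx
  exact (tendsto_tsum_mul_pow_succ_nhdsLT_one hsum).comp h1

theorem tsum_one_div_succ_sq : ∑' n : ℕ, 1 / ((n : ℝ) + 1) ^ 2 = π ^ 2 / 6 := by
  have h := (hasSum_nat_add_iff (f := fun n : ℕ => 1 / (n : ℝ) ^ 2) 1).2
    (by simpa using hasSum_zeta_two)
  simpa using h.tsum_eq

end Polylog

section HarmonicPolylog

variable {x : ℝ}

theorem hasDerivAt_harmonicPolylog_succ (s : ℕ) (hx : |x| < 1) (hx₀ : x ≠ 0) :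
    HasDerivAt (harmonicPolylog (s + 1)) (harmonicPolylog s x / x) x :=
  hasDerivAt_weightedPolylog abs_harmonic_succ_le s hx hx₀

theorem tendsto_harmonicPolylog_nhds_zero (s : ℕ) :
    Tendsto (harmonicPolylog (s + 1)) (𝓝 0) (𝓝 0) :=
  tendsto_weightedPolylog_nhds_zero abs_harmonic_succ_le s

theorem harmonicPolylog_zero (hx : |x| < 1) :
    harmonicPolylog 0 x = -log (1 - x) / (1 - x) := by
  have hlog := hasSum_pow_div_log_of_abs_lt_one hx
  have hgeom := hasSum_geometric_of_abs_lt_one hx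
  have hprod := tsum_mul_tsum_eq_tsum_sum_range_of_summable_norm (R := ℝ)
    (summable_norm_iff.2 hlog.summable) (summable_norm_iff.2 hgeom.summable)
  rw [hlog.tsum_eq, hgeom.tsum_eq, ← div_eq_mul_inv] at hprod
  rw [hprod, harmonicPolylog, weightedPolylog]
  refine tsum_congr fun n => ?_
  have hterm : ∀ k ∈ Finset.range (n + 1), x ^ (k + 1) / ((k : ℝ) + 1) * x ^ (n - k)
      = ((k : ℝ) + 1)⁻¹ * x ^ (n + 1) := by
    intro k hk
    rw [div_mul_eq_mul_div, ← pow_add, Nat.add_right_comm,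
      Nat.add_sub_cancel' (Finset.mem_range_succ_iff.1 hk)]
    ring
  rw [Finset.sum_congr rfl hterm, ← Finset.sum_mul]
  push_cast [harmonic]
  rw [pow_zero, div_one]

end HarmonicPolylog

theorem hasDerivAt_log_one_sub {x : ℝ} (hx : x < 1) :
    HasDerivAt (fun y => log (1 - y)) (-(1 - x)⁻¹) x :=
  (hasDerivAt_log (sub_ne_zero.2 hx.ne')).comp_const_sub 1 x

theorem tendsto_log_one_sub_nhds_zero : Tendsto (fun x => log (1 - x)) (𝓝 0) (𝓝 0) := by
  simpa using (hasDerivAt_log_one_sub zero_lt_one).continuousAt.tendsto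

theorem tendsto_log_mul_log_one_sub : Tendsto (fun x => log x * log (1 - x)) (𝓝[>] 0) (𝓝 0) := by
  have hslope : Tendsto (fun x => x⁻¹ * log (1 - x)) (𝓝[>] 0) (𝓝 (-1)) := by
    have h := hasDerivAt_iff_tendsto_slope_zero.1 (hasDerivAt_log_one_sub zero_lt_one)
    simpa using h.mono_left (nhdsGT_le_nhdsNE 0)
  have hxlog : Tendsto (fun x => x * log x) (𝓝[>] 0) (𝓝 0) := by
    simpa using continuous_mul_log.continuousAt.tendsto.mono_left (nhdsWithin_le_nhds (a := 0))
  have h := hxlog.mul hslope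
  rw [zero_mul] at h
  refine h.congr' ?_
  filter_upwards [self_mem_nhdsWithin] with x hx
  field_simp [(mem_Ioi.1 hx).ne']

theorem eq_of_hasDerivAt_eq_zero_of_tendsto_nhdsGT {F : ℝ → ℝ} {a b c : ℝ}
    (hF : ∀ y ∈ Ioo a b, HasDerivAt F 0 y) (hlim : Tendsto F (𝓝[>] a) (𝓝 c)) :
    ∀ x ∈ Ioo a b, F x = c := by
  intro x hx
  obtain ⟨k, hk⟩ := isOpen_Ioo.exists_is_const_of_deriv_eq_zero isPreconnected_Ioo
    (fun y hy => (hF y hy).differentiableAt.differentiableWithinAt) (fun y hy => (hF y hy).deriv)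
  have hk' : Tendsto F (𝓝[>] a) (𝓝 k) := tendsto_const_nhds.congr' <|
    eventually_of_mem (Ioo_mem_nhdsGT (hx.1.trans hx.2)) fun y hy => (hk y hy).symm
  rw [hk x hx, tendsto_nhds_unique hk' hlim]

section Identities

variable {x : ℝ}

theorem abs_lt_one_of_mem_Ioo (hx : x ∈ Ioo (0 : ℝ) 1) : |x| < 1 :=
  abs_lt.2 ⟨by linarith [hx.1], hx.2⟩

theorem polylog_two_add_polylog_two_one_sub (hx : x ∈ Ioo (0 : ℝ) 1) :
    polylog 2 x + polylog 2 (1 - x) = π ^ 2 / 6 - log x * log (1 - x) := by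
  suffices h : ∀ y ∈ Ioo (0 : ℝ) 1,
      polylog 2 y + polylog 2 (1 - y) + log y * log (1 - y) = π ^ 2 / 6 by
    linarith [h x hx]
  refine eq_of_hasDerivAt_eq_zero_of_tendsto_nhdsGT (fun y hy => ?_) ?_
  · have hy' : 1 - y ∈ Ioo (0 : ℝ) 1 := ⟨by linarith [hy.2], by linarith [hy.1]⟩
    have h := ((hasDerivAt_polylog_two (abs_lt_one_of_mem_Ioo hy) hy.1.ne').add
      ((hasDerivAt_polylog_two (abs_lt_one_of_mem_Ioo hy') hy'.1.ne').comp_const_sub 1 y)).add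
      ((hasDerivAt_log hy.1.ne').mul (hasDerivAt_log_one_sub hy.2))
    refine h.congr_deriv ?_
    rw [sub_sub_cancel]
    field_simp [hy.1.ne', hy'.1.ne']
    ring
  · have h := ((tendsto_polylog_nhds_zero 1).mono_left nhdsWithin_le_nhds).add
      (tendsto_polylog_one_sub one_lt_two) |>.add tendsto_log_mul_log_one_sub
    rwa [zero_add, add_zero, tsum_one_div_succ_sq] at h

theorem harmonicPolylog_one (hx : x ∈ Ioo (0 : ℝ) 1) :
    harmonicPolylog 1 x = log (1 - x) ^ 2 / 2 + polylog 2 x := by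
  suffices h : ∀ y ∈ Ioo (0 : ℝ) 1,
      harmonicPolylog 1 y - log (1 - y) ^ 2 / 2 - polylog 2 y = 0 by
    linarith [h x hx]
  refine eq_of_hasDerivAt_eq_zero_of_tendsto_nhdsGT (fun y hy => ?_) ?_
  · have h := ((hasDerivAt_harmonicPolylog_succ 0 (abs_lt_one_of_mem_Ioo hy)
      hy.1.ne').sub (((hasDerivAt_log_one_sub hy.2).pow 2).div_const 2)).sub
      (hasDerivAt_polylog_two (abs_lt_one_of_mem_Ioo hy) hy.1.ne')
    refine h.congr_deriv ?_
    rw [harmonicPolylog_zero (abs_lt_one_of_mem_Ioo hy)]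
    field_simp [hy.1.ne', sub_ne_zero.2 hy.2.ne']
    ring
  · have h := ((tendsto_harmonicPolylog_nhds_zero 0).sub
      ((tendsto_log_one_sub_nhds_zero.pow 2).div_const 2)).sub
      (tendsto_polylog_nhds_zero 1)
    rw [show (0 : ℝ) - 0 ^ 2 / 2 - 0 = 0 by norm_num] at h
    exact h.mono_left nhdsWithin_le_nhds

theorem harmonicPolylog_two (hx : x ∈ Ioo (0 : ℝ) 1) :
    harmonicPolylog 2 x = (∑' n : ℕ, 1 / ((n : ℝ) + 1) ^ 3) + polylog 3 x - polylog 3 (1 - x)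
      + polylog 2 (1 - x) * log (1 - x) + log x * log (1 - x) ^ 2 / 2 := by
  suffices h : ∀ y ∈ Ioo (0 : ℝ) 1, harmonicPolylog 2 y - polylog 3 y + polylog 3 (1 - y)
      - polylog 2 (1 - y) * log (1 - y) - log y * log (1 - y) ^ 2 / 2
        = ∑' n : ℕ, 1 / ((n : ℝ) + 1) ^ 3 by
    linarith [h x hx]
  refine eq_of_hasDerivAt_eq_zero_of_tendsto_nhdsGT (fun y hy => ?_) ?_
  · have hy' : 1 - y ∈ Ioo (0 : ℝ) 1 := ⟨by linarith [hy.2], by linarith [hy.1]⟩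
    have hlog := hasDerivAt_log_one_sub hy.2
    have h := (((((hasDerivAt_harmonicPolylog_succ 1 (abs_lt_one_of_mem_Ioo hy)
      hy.1.ne').sub (hasDerivAt_polylog_succ 2 (abs_lt_one_of_mem_Ioo hy) hy.1.ne')).add
      ((hasDerivAt_polylog_succ 2 (abs_lt_one_of_mem_Ioo hy') hy'.1.ne').comp_const_sub 1 y)).sub
      (((hasDerivAt_polylog_two (abs_lt_one_of_mem_Ioo hy') hy'.1.ne').comp_const_sub 1 y).mul
        hlog)).sub (((hasDerivAt_log hy.1.ne').mul (hlog.pow 2)).div_const 2))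
    refine h.congr_deriv ?_
    rw [harmonicPolylog_one hy, sub_sub_cancel, Pi.pow_apply]
    field_simp [hy.1.ne', hy'.1.ne']
    ring
  · have h := (((((tendsto_harmonicPolylog_nhds_zero 1).sub
      (tendsto_polylog_nhds_zero 2)).mono_left nhdsWithin_le_nhds).add
      (tendsto_polylog_one_sub (by norm_num : 1 < 3))).sub
      ((tendsto_polylog_one_sub one_lt_two).mul
        (tendsto_log_one_sub_nhds_zero.mono_left nhdsWithin_le_nhds))).sub
      ((tendsto_log_mul_log_one_sub.mul
        (tendsto_log_one_sub_nhds_zero.mono_left nhdsWithin_le_nhds)).div_const 2)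
    simp only [sub_zero, zero_add, mul_zero, zero_div] at h
    refine h.congr fun y => ?_
    ring

end Identities

theorem harmonicPolylog_two_half :
    harmonicPolylog 2 (1 / 2) = (∑' n : ℕ, 1 / ((n : ℝ) + 1) ^ 3) - π ^ 2 / 12 * log 2 := by
  have hhalf : (1 / 2 : ℝ) ∈ Ioo 0 1 := by norm_num
  have h := harmonicPolylog_two hhalf
  have hrefl := polylog_two_add_polylog_two_one_sub hhalf
  have hlog : log (1 / 2) = -log 2 := by rw [one_div, log_inv]
  rw [show (1 : ℝ) - 1 / 2 = 1 / 2 by norm_num, hlog] at h hrefl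
  linear_combination h - log 2 / 2 * hrefl

theorem harmonic_over_nsq_two_pow :
    HasSum (fun n : ℕ =>
        (∑ k ∈ Finset.Icc 1 (n + 1), (1 : ℝ) / k)
          / (((n : ℝ) + 1) ^ 2 * 2 ^ (n + 1)))
      ((∑' n : ℕ, 1 / ((n : ℝ) + 1) ^ 3) - (Real.pi ^ 2 / 12) * Real.log 2) := by
  have h : HasSum (fun n : ℕ => (harmonic (n + 1) : ℝ) / ((n : ℝ) + 1) ^ 2 * (1 / 2) ^ (n + 1))
      (harmonicPolylog 2 (1 / 2)) :=
    (summable_weightedPolylog abs_harmonic_succ_le 1 (by norm_num [abs_of_pos])).hasSum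
  rw [harmonicPolylog_two_half] at h
  convert h using 2 with n
  rw [harmonic_eq_sum_Icc]
  push_cast
  rw [div_pow, one_pow, div_mul_div_comm, mul_one]
  simp only [one_div]
end
end
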